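/- arXiv:2211.16817 — 12 statements merged into one kernel-verified Lean document; each statement's English description precedes it below -/
import Mathlib

section
/- Let q ≥ 2 be a real number. The set {(a1,a2,a3) ∈ ℝ³ : a1 ≥ a2 ≥ a3, q²·a1 + a2 + q·a3 ≤ 0, and q·a1 + q²·a2 + a3 ≤ 0} is equal to the set of all linear combinations with nonnegative real coefficients of the four vectors (1,0,−q), (1−q,1−q,1−q), (1,1,−(q²+q)) and (q+1,−q²,−q²). -/
/-!
The four inequalities describe a cone over a quadrilateral whose vertices are the four generators:
each generator lies on exactly two of the facets `a₁ = a₂`, `a₂ = a₃`, `q²a₁ + a₂ + qa₃ = 0`,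
`qa₁ + q²a₂ + a₃ = 0` and, for `q ≥ 1`, on the nonnegative side of the other two, so all
nonnegative combinations of them lie in the cone.
Conversely, the plane `qa₁ - (q+1)a₂ + a₃ = 0` through the opposite vertices `λ_{α₁}` and `λ_β`
cuts the cone into two simplicial cones, spanned by `λ_{α₁}, λ_β, η₁` and by `λ_{α₁}, λ_β, η₂`.
On each of them the coordinates of a point in the basis of its three generators are the values
of the three facet forms, normalized, hence nonnegative for `q > 1`.
-/

section DotProduct

variable {R : Type*} [CommSemiring R]

def dotProduct₃ : R × R × R →ₗ[R] R × R × R →ₗ[R] R :=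
  LinearMap.mk₂ R (fun u a ↦ u.1 * a.1 + u.2.1 * a.2.1 + u.2.2 * a.2.2)
    (fun _ _ _ ↦ by simp only [Prod.fst_add, Prod.snd_add]; ring)
    (fun _ _ _ ↦ by simp only [Prod.smul_fst, Prod.smul_snd, smul_eq_mul]; ring)
    (fun _ _ _ ↦ by simp only [Prod.fst_add, Prod.snd_add]; ring)
    (fun _ _ _ ↦ by simp only [Prod.smul_fst, Prod.smul_snd, smul_eq_mul]; ring)

@[simp]
lemma dotProduct₃_apply (u a : R × R × R) :
    dotProduct₃ u a = u.1 * a.1 + u.2.1 * a.2.1 + u.2.2 * a.2.2 :=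
  rfl

end DotProduct

namespace Sp6Zip

section Generators

variable {K : Type*} [Field K]

lemma sq_add_self_add_one_ne_zero {q : K} (hq : q ^ 3 ≠ 1) : q ^ 2 + q + 1 ≠ 0 :=
  fun h ↦ hq (by linear_combination (q - 1) * h)

def lambdaAlpha1 (q : K) : K × K × K := (1, 0, -q)

def lambdaBeta (q : K) : K × K × K := (1 - q, 1 - q, 1 - q)

def eta1 (q : K) : K × K × K := (1, 1, -(q ^ 2 + q))

def eta2 (q : K) : K × K × K := (q + 1, -q ^ 2, -q ^ 2)

lemma eq_combination_lambda_eta1 {q : K} (hq : q ^ 3 ≠ 1) (a : K × K × K) :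
    a = (a.1 - a.2.1) • lambdaAlpha1 q
      + ((-(q * a.1) - q ^ 2 * a.2.1 - a.2.2) / (q ^ 3 - 1)) • lambdaBeta q
      + ((-(q * a.1) + (q + 1) * a.2.1 - a.2.2) / (q ^ 2 + q + 1)) • eta1 q := by
  have h₃ : q ^ 3 - 1 ≠ 0 := sub_ne_zero.mpr hq
  have h₂ : q ^ 2 + q + 1 ≠ 0 := sq_add_self_add_one_ne_zero hq
  obtain ⟨x, y, z⟩ := a
  simp only [lambdaAlpha1, lambdaBeta, eta1, Prod.smul_mk, smul_eq_mul, Prod.mk_add_mk,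
    Prod.mk.injEq]
  refine ⟨?_, ?_, ?_⟩ <;> grind

lemma eq_combination_lambda_eta2 {q : K} (hq₀ : q ≠ 0) (hq : q ^ 3 ≠ 1) (a : K × K × K) :
    a = ((a.2.1 - a.2.2) / q) • lambdaAlpha1 q
      + ((-(q ^ 2 * a.1) - a.2.1 - q * a.2.2) / (q ^ 3 - 1)) • lambdaBeta q
      + ((q * a.1 - (q + 1) * a.2.1 + a.2.2) / (q * (q ^ 2 + q + 1))) • eta2 q := by
  have h₃ : q ^ 3 - 1 ≠ 0 := sub_ne_zero.mpr hq
  have h₂ : q * (q ^ 2 + q + 1) ≠ 0 := mul_ne_zero hq₀ (sq_add_self_add_one_ne_zero hq)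
  obtain ⟨x, y, z⟩ := a
  simp only [lambdaAlpha1, lambdaBeta, eta2, Prod.smul_mk, smul_eq_mul, Prod.mk_add_mk,
    Prod.mk.injEq]
  refine ⟨?_, ?_, ?_⟩ <;> grind

end Generators

section Cone

variable {K : Type*} [Field K] [LinearOrder K] [IsStrictOrderedRing K]

def cone (q : K) : PointedCone K (K × K × K) :=
  PointedCone.dual dotProduct₃ {(1, -1, 0), (0, 1, -1), (-q ^ 2, -1, -q), (-q, -q ^ 2, -1)}

lemma mem_cone_iff {q : K} {a : K × K × K} :
    a ∈ cone q ↔ a.2.1 ≤ a.1 ∧ a.2.2 ≤ a.2.1 ∧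
      q ^ 2 * a.1 + a.2.1 + q * a.2.2 ≤ 0 ∧ q * a.1 + q ^ 2 * a.2.1 + a.2.2 ≤ 0 := by
  simp only [cone, PointedCone.mem_dual, Set.forall_mem_insert, Set.mem_singleton_iff, forall_eq,
    dotProduct₃_apply]
  constructor <;> rintro ⟨h₁, h₂, h₃, h₄⟩ <;> refine ⟨?_, ?_, ?_, ?_⟩ <;> linarith

lemma lambdaAlpha1_mem_cone {q : K} (hq : 0 ≤ q) : lambdaAlpha1 q ∈ cone q := by
  simp only [mem_cone_iff, lambdaAlpha1]
  exact ⟨zero_le_one, by linarith, le_of_eq (by ring), le_of_eq (by ring)⟩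

lemma lambdaBeta_mem_cone {q : K} (hq : 1 ≤ q) : lambdaBeta q ∈ cone q := by
  simp only [mem_cone_iff, lambdaBeta]
  refine ⟨le_rfl, le_rfl, ?_, ?_⟩ <;> nlinarith

lemma eta1_mem_cone {q : K} (hq : 1 ≤ q) : eta1 q ∈ cone q := by
  simp only [mem_cone_iff, eta1]
  refine ⟨le_rfl, ?_, ?_, ?_⟩ <;> nlinarith

lemma eta2_mem_cone {q : K} (hq : 1 ≤ q) : eta2 q ∈ cone q := by
  simp only [mem_cone_iff, eta2]
  have : q ≤ q ^ 4 := le_self_pow₀ hq (by norm_num)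
  refine ⟨?_, le_rfl, ?_, ?_⟩ <;> nlinarith

lemma combination_mem_cone {q : K} (hq : 1 ≤ q) {c₁ c₂ c₃ c₄ : K} (h₁ : 0 ≤ c₁) (h₂ : 0 ≤ c₂)
    (h₃ : 0 ≤ c₃) (h₄ : 0 ≤ c₄) :
    c₁ • lambdaAlpha1 q + c₂ • lambdaBeta q + c₃ • eta1 q + c₄ • eta2 q ∈ cone q :=
  add_mem (add_mem (add_mem
    ((cone q).smul_mem h₁ (lambdaAlpha1_mem_cone (by linarith)))
    ((cone q).smul_mem h₂ (lambdaBeta_mem_cone hq)))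
    ((cone q).smul_mem h₃ (eta1_mem_cone hq)))
    ((cone q).smul_mem h₄ (eta2_mem_cone hq))

lemma exists_combination_eta1_of_mem_cone {q : K} (hq : 1 < q) {a : K × K × K}
    (ha : a ∈ cone q) (hg : q * a.1 - (q + 1) * a.2.1 + a.2.2 ≤ 0) :
    ∃ c₁ c₂ c₃ : K, 0 ≤ c₁ ∧ 0 ≤ c₂ ∧ 0 ≤ c₃ ∧
      a = c₁ • lambdaAlpha1 q + c₂ • lambdaBeta q + c₃ • eta1 q := by
  obtain ⟨h₁, -, -, h₄⟩ := mem_cone_iff.mp ha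
  have hq₃ : 1 < q ^ 3 := one_lt_pow₀ hq three_ne_zero
  refine ⟨_, _, _, ?_, ?_, ?_, eq_combination_lambda_eta1 hq₃.ne' a⟩
  · linarith
  · exact div_nonneg (by linarith) (sub_nonneg.mpr hq₃.le)
  · exact div_nonneg (by linarith) (by positivity)

lemma exists_combination_eta2_of_mem_cone {q : K} (hq : 1 < q) {a : K × K × K}
    (ha : a ∈ cone q) (hg : 0 ≤ q * a.1 - (q + 1) * a.2.1 + a.2.2) :
    ∃ c₁ c₂ c₄ : K, 0 ≤ c₁ ∧ 0 ≤ c₂ ∧ 0 ≤ c₄ ∧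
      a = c₁ • lambdaAlpha1 q + c₂ • lambdaBeta q + c₄ • eta2 q := by
  obtain ⟨-, h₂, h₃, -⟩ := mem_cone_iff.mp ha
  have hq₀ : 0 < q := by linarith
  have hq₃ : 1 < q ^ 3 := one_lt_pow₀ hq three_ne_zero
  refine ⟨_, _, _, ?_, ?_, ?_, eq_combination_lambda_eta2 hq₀.ne' hq₃.ne' a⟩
  · exact div_nonneg (by linarith) hq₀.le
  · exact div_nonneg (by linarith) (sub_nonneg.mpr hq₃.le)
  · exact div_nonneg hg (by positivity)

lemma exists_combination_of_mem_cone {q : K} (hq : 1 < q) {a : K × K × K} (ha : a ∈ cone q) :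
    ∃ c₁ c₂ c₃ c₄ : K, 0 ≤ c₁ ∧ 0 ≤ c₂ ∧ 0 ≤ c₃ ∧ 0 ≤ c₄ ∧
      a = c₁ • lambdaAlpha1 q + c₂ • lambdaBeta q + c₃ • eta1 q + c₄ • eta2 q := by
  rcases le_total (q * a.1 - (q + 1) * a.2.1 + a.2.2) 0 with hg | hg
  · obtain ⟨c₁, c₂, c₃, h₁, h₂, h₃, rfl⟩ := exists_combination_eta1_of_mem_cone hq ha hg
    exact ⟨c₁, c₂, c₃, 0, h₁, h₂, h₃, le_rfl, by rw [zero_smul, add_zero]⟩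
  · obtain ⟨c₁, c₂, c₄, h₁, h₂, h₄, rfl⟩ := exists_combination_eta2_of_mem_cone hq ha hg
    exact ⟨c₁, c₂, 0, c₄, h₁, h₂, le_rfl, h₄, by rw [zero_smul, add_zero]⟩

lemma mem_cone_iff_exists_combination {q : K} (hq : 1 < q) {a : K × K × K} :
    a ∈ cone q ↔ ∃ c₁ c₂ c₃ c₄ : K, 0 ≤ c₁ ∧ 0 ≤ c₂ ∧ 0 ≤ c₃ ∧ 0 ≤ c₄ ∧
      a = c₁ • lambdaAlpha1 q + c₂ • lambdaBeta q + c₃ • eta1 q + c₄ • eta2 q := by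
  refine ⟨exists_combination_of_mem_cone hq, ?_⟩
  rintro ⟨c₁, c₂, c₃, c₄, h₁, h₂, h₃, h₄, rfl⟩
  exact combination_mem_cone hq.le h₁ h₂ h₃ h₄

end Cone

end Sp6Zip

/-- For `q ≥ 2`, the cone `{(a1,a2,a3) : a1 ≥ a2 ≥ a3, q²a1+a2+qa3 ≤ 0, qa1+q²a2+a3 ≤ 0}`
equals the set of nonnegative real linear combinations of the four vectors
`(1,0,−q)`, `(1−q,1−q,1−q)`, `(1,1,−(q²+q))`, `(q+1,−q²,−q²)`. -/
theorem sp6_zip_cone_generators (q : ℝ) (hq : 2 ≤ q) :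
    {a : ℝ × ℝ × ℝ | a.2.1 ≤ a.1 ∧ a.2.2 ≤ a.2.1 ∧
        q ^ 2 * a.1 + a.2.1 + q * a.2.2 ≤ 0 ∧
        q * a.1 + q ^ 2 * a.2.1 + a.2.2 ≤ 0} =
    {a : ℝ × ℝ × ℝ | ∃ c1 c2 c3 c4 : ℝ, 0 ≤ c1 ∧ 0 ≤ c2 ∧ 0 ≤ c3 ∧ 0 ≤ c4 ∧
        a = c1 • ((1 : ℝ), (0 : ℝ), -q) + c2 • (1 - q, 1 - q, 1 - q) +
            c3 • ((1 : ℝ), (1 : ℝ), -(q ^ 2 + q)) + c4 • (q + 1, -q ^ 2, -q ^ 2)} :=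
  Set.ext fun _ ↦
    Sp6Zip.mem_cone_iff.symm.trans (Sp6Zip.mem_cone_iff_exists_combination (by linarith))
end

section
/- Let q ≥ 2 be a real number. The set {(a1,a2,a3) ∈ ℝ³ : a1 ≥ a2 ≥ a3 and q²·a1 + q·a2 + a3 ≤ 0} is equal to the set of all linear combinations with nonnegative real coefficients of the three vectors (1−q,1−q,1−q), (1,1,−(q²+q)) and (q+1,−q²,−q²). -/
/-!
The three walls `a₁ - a₂`, `a₂ - a₃`, `-(q²a₁ + qa₂ + a₃)` of the cone and the three proposed
generators are biorthogonal up to the positive factors `q³ - 1`, `q² + q + 1`, `q² + q + 1`.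
Hence the coordinates of a vector in the basis of generators are its wall values divided by
these factors, and they are nonnegative exactly when the vector lies in the cone.
-/

section Biorthogonal

variable {𝕜 ι E : Type*} [Field 𝕜] [Fintype ι] [AddCommGroup E] [Module 𝕜 E]
  (g : ι → E →ₗ[𝕜] 𝕜) (v : ι → E)

theorem eq_sum_div_smul_of_biorthogonal (hdiag : ∀ i, g i (v i) ≠ 0)
    (hoff : ∀ i j, i ≠ j → g i (v j) = 0) (hsep : ∀ x, (∀ i, g i x = 0) → x = 0) (x : E) :
    x = ∑ i, (g i x / g i (v i)) • v i := by
  refine (sub_eq_zero.1 (hsep _ fun j => ?_)).symm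
  have hcoord : ∑ i, g i x / g i (v i) * g j (v i) = g j x := by
    rw [Finset.sum_eq_single j (fun i _ hij => by rw [hoff j i hij.symm, mul_zero])
      (fun hj => absurd (Finset.mem_univ j) hj), div_mul_cancel₀ _ (hdiag j)]
  simp only [map_sub, map_sum, map_smul, smul_eq_mul, hcoord, sub_self]

theorem setOf_forall_nonneg_eq_nonneg_span [LinearOrder 𝕜] [IsStrictOrderedRing 𝕜]
    (hdiag : ∀ i, 0 < g i (v i)) (hoff : ∀ i j, i ≠ j → g i (v j) = 0)
    (hsep : ∀ x, (∀ i, g i x = 0) → x = 0) :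
    {x | ∀ i, 0 ≤ g i x} = {x | ∃ c : ι → 𝕜, (∀ i, 0 ≤ c i) ∧ x = ∑ i, c i • v i} := by
  ext x
  constructor
  · intro hx
    exact ⟨fun i => g i x / g i (v i), fun i => div_nonneg (hx i) (hdiag i).le,
      eq_sum_div_smul_of_biorthogonal g v (fun i => (hdiag i).ne') hoff hsep x⟩
  · rintro ⟨c, hc, rfl⟩ i
    have hgv : ∀ j, 0 ≤ g i (v j) := fun j => by
      rcases eq_or_ne i j with rfl | hij
      exacts [(hdiag i).le, (hoff i j hij).ge]
    simpa only [map_sum, map_smul, smul_eq_mul] using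
      Finset.sum_nonneg fun j _ => mul_nonneg (hc j) (hgv j)

end Biorthogonal

section Sp6

local notation "a₁" => LinearMap.fst ℝ ℝ (ℝ × ℝ)
local notation "a₂" => LinearMap.fst ℝ ℝ ℝ ∘ₗ LinearMap.snd ℝ ℝ (ℝ × ℝ)
local notation "a₃" => LinearMap.snd ℝ ℝ ℝ ∘ₗ LinearMap.snd ℝ ℝ (ℝ × ℝ)

def hwConeWalls (q : ℝ) : Fin 3 → ℝ × ℝ × ℝ →ₗ[ℝ] ℝ :=
  ![-(q ^ 2 • a₁ + q • a₂ + a₃), a₂ - a₃, a₁ - a₂]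

def hwConeGenerators (q : ℝ) : Fin 3 → ℝ × ℝ × ℝ :=
  ![(1 - q, 1 - q, 1 - q), (1, 1, -(q ^ 2 + q)), (q + 1, -q ^ 2, -q ^ 2)]

theorem hwConeWalls_apply_hwConeGenerators_self {q : ℝ} (hq : 1 < q) (i : Fin 3) :
    0 < hwConeWalls q i (hwConeGenerators q i) := by
  fin_cases i <;> simp [hwConeWalls, hwConeGenerators] <;> nlinarith

theorem hwConeWalls_apply_hwConeGenerators_of_ne (q : ℝ) (i j : Fin 3) (hij : i ≠ j) :
    hwConeWalls q i (hwConeGenerators q j) = 0 := by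
  fin_cases i <;> fin_cases j <;> simp_all [hwConeWalls, hwConeGenerators]; ring

theorem eq_zero_of_forall_hwConeWalls_eq_zero (q : ℝ) (x : ℝ × ℝ × ℝ)
    (hx : ∀ i, hwConeWalls q i x = 0) : x = 0 := by
  have h₀ := hx 0
  have h₁ := hx 1
  have h₂ := hx 2
  simp [hwConeWalls] at h₀ h₁ h₂
  have hx₁ : (q ^ 2 + q + 1) * x.1 = 0 := by linear_combination -h₀ + (1 + q) * h₂ + h₁
  have hq : q ^ 2 + q + 1 ≠ 0 := by nlinarith [sq_nonneg (2 * q + 1)]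
  have hx₁' : x.1 = 0 := (mul_eq_zero.1 hx₁).resolve_left hq
  ext <;> simp <;> linarith

theorem forall_hwConeWalls_nonneg_iff (q : ℝ) (x : ℝ × ℝ × ℝ) :
    (∀ i, 0 ≤ hwConeWalls q i x) ↔
      x.2.1 ≤ x.1 ∧ x.2.2 ≤ x.2.1 ∧ q ^ 2 * x.1 + q * x.2.1 + x.2.2 ≤ 0 := by
  simp [Fin.forall_fin_succ, hwConeWalls]
  constructor <;> intro h <;> refine ⟨?_, ?_, ?_⟩ <;> linarith [h.1, h.2.1, h.2.2]

theorem exists_nonneg_sum_hwConeGenerators_iff (q : ℝ) (x : ℝ × ℝ × ℝ) :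
    (∃ c : Fin 3 → ℝ, (∀ i, 0 ≤ c i) ∧ x = ∑ i, c i • hwConeGenerators q i) ↔
      ∃ c₁ c₂ c₃ : ℝ, 0 ≤ c₁ ∧ 0 ≤ c₂ ∧ 0 ≤ c₃ ∧
        x = c₁ • (1 - q, 1 - q, 1 - q) + c₂ • ((1 : ℝ), (1 : ℝ), -(q ^ 2 + q)) +
          c₃ • (q + 1, -q ^ 2, -q ^ 2) := by
  constructor
  · rintro ⟨c, hc, rfl⟩
    exact ⟨c 0, c 1, c 2, hc 0, hc 1, hc 2, by simp [Fin.sum_univ_three, hwConeGenerators]⟩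
  · rintro ⟨c₁, c₂, c₃, h₁, h₂, h₃, rfl⟩
    exact ⟨![c₁, c₂, c₃], by simp [Fin.forall_fin_succ, *],
      by simp [Fin.sum_univ_three, hwConeGenerators]⟩

end Sp6

/-- For `q ≥ 2`, the cone `{(a1,a2,a3) : a1 ≥ a2 ≥ a3, q²a1+qa2+a3 ≤ 0}` equals the set of
nonnegative real linear combinations of `(1−q,1−q,1−q)`, `(1,1,−(q²+q))`, `(q+1,−q²,−q²)`. -/
theorem sp6_hw_cone_generators (q : ℝ) (hq : 2 ≤ q) :
    {a : ℝ × ℝ × ℝ | a.2.1 ≤ a.1 ∧ a.2.2 ≤ a.2.1 ∧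
        q ^ 2 * a.1 + q * a.2.1 + a.2.2 ≤ 0} =
    {a : ℝ × ℝ × ℝ | ∃ c1 c2 c3 : ℝ, 0 ≤ c1 ∧ 0 ≤ c2 ∧ 0 ≤ c3 ∧
        a = c1 • (1 - q, 1 - q, 1 - q) + c2 • ((1 : ℝ), (1 : ℝ), -(q ^ 2 + q)) +
            c3 • (q + 1, -q ^ 2, -q ^ 2)} := by
  have hcone := setOf_forall_nonneg_eq_nonneg_span (hwConeWalls q) (hwConeGenerators q)
    (hwConeWalls_apply_hwConeGenerators_self (by linarith))
    (hwConeWalls_apply_hwConeGenerators_of_ne q) (eq_zero_of_forall_hwConeWalls_eq_zero q)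
  ext x
  simpa only [Set.mem_ofPred_eq, forall_hwConeWalls_nonneg_iff,
    exists_nonneg_sum_hwConeGenerators_iff] using Set.ext_iff.1 hcone x
end

section
/- Let q ≥ 1 be a real number. Suppose λ ∈ ℝ³ can be written as λ = m1·(1,0,−q) + m2·(1,1−q,−q) + m3·(1−q,1−q,1−q) + μ, where m1, m2, m3 ≥ 0 are real numbers and μ = (μ1,μ2,μ3) ∈ ℝ³ satisfies μ1 ≥ μ2 ≥ μ3 and q²·μ1 + q·μ2 + μ3 ≤ 0. Then λ1 ≥ λ2 ≥ λ3, q²·λ1 + λ2 + q·λ3 ≤ 0, and q·λ1 + q²·λ2 + λ3 ≤ 0. -/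
/-!
All four conditions defining `⟨C_zip⟩` are linear inequalities, so `⟨C_zip⟩` is a convex cone
and it suffices to check that it contains the three partial Hasse weights and the cone `C_hw`.
For the Hasse weights this is a direct computation using `q ≥ 1`. For `μ ∈ C_hw`, the two zip
inequalities differ from the highest weight inequality by `-(q - 1)(μ₂ - μ₃)` and
`-q(q - 1)(μ₁ - μ₂)` respectively, both nonpositive since `μ` is dominant.
-/

open PointedCone

namespace Sp6Siegel

def zipCone (q : ℝ) : PointedCone ℝ (ℝ × ℝ × ℝ) where
  carrier := {l | l.2.1 ≤ l.1 ∧ l.2.2 ≤ l.2.1 ∧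
    q ^ 2 * l.1 + l.2.1 + q * l.2.2 ≤ 0 ∧ q * l.1 + q ^ 2 * l.2.1 + l.2.2 ≤ 0}
  add_mem' := by
    rintro ⟨a1, a2, a3⟩ ⟨b1, b2, b3⟩ ⟨ha12, ha23, ha, ha'⟩ ⟨hb12, hb23, hb, hb'⟩
    exact ⟨by simp; linarith, by simp; linarith, by simp; linarith, by simp; linarith⟩
  zero_mem' := by simp
  smul_mem' := by
    rintro ⟨c, hc⟩ ⟨a1, a2, a3⟩ ⟨h12, h23, h, h'⟩
    simp only [Set.mem_ofPred_eq, Prod.smul_mk, Nonneg.mk_smul, smul_eq_mul] at *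
    refine ⟨by gcongr, by gcongr, ?_, ?_⟩ <;> nlinarith

def hwCone (q : ℝ) : PointedCone ℝ (ℝ × ℝ × ℝ) where
  carrier := {l | l.2.1 ≤ l.1 ∧ l.2.2 ≤ l.2.1 ∧ q ^ 2 * l.1 + q * l.2.1 + l.2.2 ≤ 0}
  add_mem' := by
    rintro ⟨a1, a2, a3⟩ ⟨b1, b2, b3⟩ ⟨ha12, ha23, ha⟩ ⟨hb12, hb23, hb⟩
    exact ⟨by simp; linarith, by simp; linarith, by simp; linarith⟩
  zero_mem' := by simp
  smul_mem' := by
    rintro ⟨c, hc⟩ ⟨a1, a2, a3⟩ ⟨h12, h23, h⟩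
    simp only [Set.mem_ofPred_eq, Prod.smul_mk, Nonneg.mk_smul, smul_eq_mul] at *
    exact ⟨by gcongr, by gcongr, by nlinarith⟩

/-- The generators are the partial Hasse invariant weights `λ_{α₁}`, `λ_{α₂}`, `λ_β`. -/
def hasseCone (q : ℝ) : PointedCone ℝ (ℝ × ℝ × ℝ) :=
  hull ℝ {(1, 0, -q), (1, 1 - q, -q), (1 - q, 1 - q, 1 - q)}

variable {q : ℝ}

lemma mem_zipCone {l : ℝ × ℝ × ℝ} : l ∈ zipCone q ↔ l.2.1 ≤ l.1 ∧ l.2.2 ≤ l.2.1 ∧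
    q ^ 2 * l.1 + l.2.1 + q * l.2.2 ≤ 0 ∧ q * l.1 + q ^ 2 * l.2.1 + l.2.2 ≤ 0 :=
  Iff.rfl

lemma hasseCone_le_zipCone (hq : 1 ≤ q) : hasseCone q ≤ zipCone q := by
  refine Submodule.span_le.2 ?_
  rintro l (rfl | rfl | rfl) <;> refine ⟨?_, ?_, ?_, ?_⟩ <;> dsimp only <;> nlinarith

lemma hwCone_le_zipCone (hq : 1 ≤ q) : hwCone q ≤ zipCone q := by
  rintro ⟨a1, a2, a3⟩ ⟨h12, h23, h⟩
  refine ⟨h12, h23, ?_, ?_⟩ <;> dsimp only at *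
  · linear_combination h + mul_nonneg (sub_nonneg.2 hq) (sub_nonneg.2 h23)
  · linear_combination h + mul_nonneg (mul_nonneg (by linarith : (0 : ℝ) ≤ q) (sub_nonneg.2 hq))
      (sub_nonneg.2 h12)

end Sp6Siegel

open Sp6Siegel in
/-- Cone inclusion `C_Hasse + C_hw ⊆ ⟨C_zip⟩` for `Sp(6)` over `F_q`. -/
theorem sp6_hasse_plus_hw_subset_zip (q : ℝ) (hq : 1 ≤ q)
    (l μ : ℝ × ℝ × ℝ) (m1 m2 m3 : ℝ)
    (hm1 : 0 ≤ m1) (hm2 : 0 ≤ m2) (hm3 : 0 ≤ m3)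
    (hμ12 : μ.2.1 ≤ μ.1) (hμ23 : μ.2.2 ≤ μ.2.1)
    (hμ : q ^ 2 * μ.1 + q * μ.2.1 + μ.2.2 ≤ 0)
    (hl : l = m1 • ((1 : ℝ), (0 : ℝ), -q) + m2 • ((1 : ℝ), 1 - q, -q) +
              m3 • (1 - q, 1 - q, 1 - q) + μ) :
    l.2.1 ≤ l.1 ∧ l.2.2 ≤ l.2.1 ∧
      q ^ 2 * l.1 + l.2.1 + q * l.2.2 ≤ 0 ∧
      q * l.1 + q ^ 2 * l.2.1 + l.2.2 ≤ 0 := by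
  have hhasse : m1 • ((1 : ℝ), (0 : ℝ), -q) + m2 • ((1 : ℝ), 1 - q, -q) +
      m3 • (1 - q, 1 - q, 1 - q) ∈ hasseCone q :=
    add_mem (add_mem (smul_mem _ hm1 (subset_hull (by simp)))
      (smul_mem _ hm2 (subset_hull (by simp)))) (smul_mem _ hm3 (subset_hull (by simp)))
  have hhw : μ ∈ hwCone q := ⟨hμ12, hμ23, hμ⟩
  have hsum : l ∈ hasseCone q ⊔ hwCone q := hl ▸ Submodule.add_mem_sup hhasse hhw
  exact mem_zipCone.1 (sup_le (hasseCone_le_zipCone hq) (hwCone_le_zipCone hq) hsum)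
end

section
/- Let q ≥ 5 be a real number and set θ(q) := (q⁵ + 2q⁴ + 2q³ + 4q² + 2q + 1) / (q⁶ + 2q⁵ − q⁴ + q³ − q² − q − 1). Suppose a = (a1,a2,a3) ∈ ℝ³ satisfies the three inequalities −(q²−q)·a1 + (q²+1)·a2 + (q−1)·a3 ≤ 0, a1 + θ(q)·a2 ≤ 0, and −(q−1)·a2 + (q+1)·a3 ≤ 0, and let n1, n2 ≥ 0 be real numbers. Then λ := a + n1·(0,1,−q) + n2·(1,−q,0) satisfies q²·λ1 + q·λ2 + λ3 ≤ 0. -/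
/-!
The Hasse weights `(0,1,-q)` and `(1,-q,0)` lie in the kernel of `λ ↦ q²λ₁ + qλ₂ + λ₃`, so the
claim reduces to `q²a₁ + qa₂ + a₃ ≤ 0`, and that is a Farkas combination of the three bounds:
writing `θ(q) = N/D` and `ℓ₁, ℓ₃` for the left sides of the first and third bounds,
`A · (q²a₁ + qa₂ + a₃) = B · ℓ₁(a) + P · D · (a₁ + θa₂) + C · ℓ₃(a)`
with `A = (q - 1)(q⁸ + 6q⁷ + 10q⁶ + 10q⁵ + 18q⁴ + 12q³ + 9q² + 4q + 2)`,
`B = q⁷ - 2q⁶ - 9q⁵ - 4q⁴ - 7q³ - 3q² - q + 1`, `P = q⁵ + 3q⁴ - q² + q` and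
`C = q⁸ + 3q⁷ + 4q⁶ + 3q⁵ - 3q³ - 4q² - 3q - 1`. All multipliers are positive for `q ≥ 5`;
only `B` needs more than `q > 1`.
-/

namespace Sp6

noncomputable def theta (q : ℝ) : ℝ :=
  (q ^ 5 + 2 * q ^ 4 + 2 * q ^ 3 + 4 * q ^ 2 + 2 * q + 1) /
    (q ^ 6 + 2 * q ^ 5 - q ^ 4 + q ^ 3 - q ^ 2 - q - 1)

theorem theta_denom_pos {q : ℝ} (hq : 1 < q) :
    0 < q ^ 6 + 2 * q ^ 5 - q ^ 4 + q ^ 3 - q ^ 2 - q - 1 := by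
  obtain ⟨t, ht, rfl⟩ : ∃ t, 0 < t ∧ q = t + 1 := ⟨q - 1, by linarith, by ring⟩
  ring_nf
  positivity

theorem denom_mul_theta {q : ℝ} (hq : 1 < q) :
    (q ^ 6 + 2 * q ^ 5 - q ^ 4 + q ^ 3 - q ^ 2 - q - 1) * theta q
      = q ^ 5 + 2 * q ^ 4 + 2 * q ^ 3 + 4 * q ^ 2 + 2 * q + 1 :=
  mul_div_cancel₀ _ (theta_denom_pos hq).ne'

theorem farkas_coeff_nonneg {q : ℝ} (hq : 5 ≤ q) :
    0 ≤ q ^ 7 - 2 * q ^ 6 - 9 * q ^ 5 - 4 * q ^ 4 - 7 * q ^ 3 - 3 * q ^ 2 - q + 1 := by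
  obtain ⟨t, ht, rfl⟩ : ∃ t, 0 ≤ t ∧ q = t + 5 := ⟨q - 5, by linarith, by ring⟩
  ring_nf
  positivity

theorem hw_nonpos_of_cone_bounds {q a1 a2 a3 : ℝ} (hq : 5 ≤ q)
    (h1 : -(q ^ 2 - q) * a1 + (q ^ 2 + 1) * a2 + (q - 1) * a3 ≤ 0)
    (h2 : a1 + theta q * a2 ≤ 0)
    (h3 : -(q - 1) * a2 + (q + 1) * a3 ≤ 0) :
    q ^ 2 * a1 + q * a2 + a3 ≤ 0 := by
  have hq1 : 1 < q := by linarith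
  have hD := theta_denom_pos hq1
  have hB := farkas_coeff_nonneg hq
  have hA : 0 < (q - 1) * (q ^ 8 + 6 * q ^ 7 + 10 * q ^ 6 + 10 * q ^ 5 + 18 * q ^ 4
      + 12 * q ^ 3 + 9 * q ^ 2 + 4 * q + 2) := by
    have : 0 < q - 1 := by linarith
    positivity
  have hP : 0 ≤ q ^ 5 + 3 * q ^ 4 - q ^ 2 + q := by nlinarith
  have hC : 0 ≤ q ^ 8 + 3 * q ^ 7 + 4 * q ^ 6 + 3 * q ^ 5 - 3 * q ^ 3 - 4 * q ^ 2 - 3 * q - 1 := by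
    nlinarith
  have farkas : (q - 1) * (q ^ 8 + 6 * q ^ 7 + 10 * q ^ 6 + 10 * q ^ 5 + 18 * q ^ 4
        + 12 * q ^ 3 + 9 * q ^ 2 + 4 * q + 2) * (q ^ 2 * a1 + q * a2 + a3)
      = (q ^ 7 - 2 * q ^ 6 - 9 * q ^ 5 - 4 * q ^ 4 - 7 * q ^ 3 - 3 * q ^ 2 - q + 1)
          * (-(q ^ 2 - q) * a1 + (q ^ 2 + 1) * a2 + (q - 1) * a3)
        + (q ^ 5 + 3 * q ^ 4 - q ^ 2 + q) * (q ^ 6 + 2 * q ^ 5 - q ^ 4 + q ^ 3 - q ^ 2 - q - 1)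
          * (a1 + theta q * a2)
        + (q ^ 8 + 3 * q ^ 7 + 4 * q ^ 6 + 3 * q ^ 5 - 3 * q ^ 3 - 4 * q ^ 2 - 3 * q - 1)
          * (-(q - 1) * a2 + (q + 1) * a3) := by
    linear_combination -(q ^ 5 + 3 * q ^ 4 - q ^ 2 + q) * a2 * denom_mul_theta hq1
  refine nonpos_of_mul_nonpos_right ?_ hA
  rw [farkas]
  linarith [mul_nonpos_of_nonneg_of_nonpos hB h1,
    mul_nonpos_of_nonneg_of_nonpos (mul_nonneg hP hD.le) h2,
    mul_nonpos_of_nonneg_of_nonpos hC h3]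

end Sp6

theorem sp6_step_564_general (q a1 a2 a3 n1 n2 : ℝ) (hq : 5 ≤ q)
    (h1 : -(q ^ 2 - q) * a1 + (q ^ 2 + 1) * a2 + (q - 1) * a3 ≤ 0)
    (h2 : a1 + ((q ^ 5 + 2 * q ^ 4 + 2 * q ^ 3 + 4 * q ^ 2 + 2 * q + 1) /
          (q ^ 6 + 2 * q ^ 5 - q ^ 4 + q ^ 3 - q ^ 2 - q - 1)) * a2 ≤ 0)
    (h3 : -(q - 1) * a2 + (q + 1) * a3 ≤ 0) :
    q ^ 2 * (a1 + n2) + q * (a2 + n1 - q * n2) + (a3 - q * n1) ≤ 0 :=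
  calc q ^ 2 * (a1 + n2) + q * (a2 + n1 - q * n2) + (a3 - q * n1)
      = q ^ 2 * a1 + q * a2 + a3 := by ring
    _ ≤ 0 := Sp6.hw_nonpos_of_cone_bounds hq h1 h2 h3

/-- Final inductive step for the stratum `[564]` in the `Sp(6)` proof:
`λ := a + n1·(0,1,−q) + n2·(1,−q,0)` satisfies `q²λ1 + qλ2 + λ3 ≤ 0`. -/
theorem sp6_step_564 (q a1 a2 a3 n1 n2 : ℝ) (hq : 5 ≤ q)
    (h1 : -(q ^ 2 - q) * a1 + (q ^ 2 + 1) * a2 + (q - 1) * a3 ≤ 0)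
    (h2 : a1 + ((q ^ 5 + 2 * q ^ 4 + 2 * q ^ 3 + 4 * q ^ 2 + 2 * q + 1) /
          (q ^ 6 + 2 * q ^ 5 - q ^ 4 + q ^ 3 - q ^ 2 - q - 1)) * a2 ≤ 0)
    (h3 : -(q - 1) * a2 + (q + 1) * a3 ≤ 0)
    (hn1 : 0 ≤ n1) (hn2 : 0 ≤ n2) :
    q ^ 2 * (a1 + n2) + q * (a2 + n1 - q * n2) + (a3 - q * n1) ≤ 0 :=
  sp6_step_564_general q a1 a2 a3 n1 n2 hq h1 h2 h3
end

section
/- Let q > 1 be a real number. Suppose a = (a1,a2,a3) ∈ ℝ³ satisfies q·a1 − a3 ≤ 0 and −q·a1 + (q−1)·a2 + a3 ≤ 0, and let n1, n2 ≥ 0 be real numbers. Then λ := a + n1·(0,−q,−1) + n2·(−q,q+1,1) satisfies both (q²+q)·λ1 + (q²+1)·λ2 − (q+1)·λ3 ≤ 0 and q²·λ1 + λ2 − q·λ3 ≤ 0. -/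
/-!
Write `L₁, L₂` for the two linear forms of the conclusion. Along the Hasse weights,
`L₁` is unchanged by `(-q, q+1, 1)` and changes by `(1 - q³)·n₁` along `(0, -q, -1)`, while `L₂`
is unchanged by `(0, -q, -1)` and changes by `(1 - q³)·n₂` along `(-q, q+1, 1)`; for `q > 1` both
changes are nonpositive. It remains to bound `L₁(a), L₂(a)`: multiplied by `q - 1`, each is a
combination with nonnegative coefficients of the two lower Hasse-cone bounds
`q a₁ - a₃` and `-q a₁ + (q - 1) a₂ + a₃`.
-/

namespace Sp6Stratum135

variable {R : Type*} [CommRing R]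

def coneForm₁ (q l₁ l₂ l₃ : R) : R := (q ^ 2 + q) * l₁ + (q ^ 2 + 1) * l₂ - (q + 1) * l₃

def coneForm₂ (q l₁ l₂ l₃ : R) : R := q ^ 2 * l₁ + l₂ - q * l₃

theorem coneForm₁_add_weights (q a₁ a₂ a₃ n₁ n₂ : R) :
    coneForm₁ q (a₁ - q * n₂) (a₂ - q * n₁ + (q + 1) * n₂) (a₃ - n₁ + n₂) =
      coneForm₁ q a₁ a₂ a₃ + (1 - q ^ 3) * n₁ := by
  unfold coneForm₁; ring

theorem coneForm₂_add_weights (q a₁ a₂ a₃ n₁ n₂ : R) :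
    coneForm₂ q (a₁ - q * n₂) (a₂ - q * n₁ + (q + 1) * n₂) (a₃ - n₁ + n₂) =
      coneForm₂ q a₁ a₂ a₃ + (1 - q ^ 3) * n₂ := by
  unfold coneForm₂; ring

theorem sub_one_mul_coneForm₁ (q a₁ a₂ a₃ : R) :
    (q - 1) * coneForm₁ q a₁ a₂ a₃ =
      2 * q ^ 2 * (q * a₁ - a₃) + (q ^ 2 + 1) * (-q * a₁ + (q - 1) * a₂ + a₃) := by
  unfold coneForm₁; ring

theorem sub_one_mul_coneForm₂ (q a₁ a₂ a₃ : R) :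
    (q - 1) * coneForm₂ q a₁ a₂ a₃ =
      (q ^ 2 - q + 1) * (q * a₁ - a₃) + (-q * a₁ + (q - 1) * a₂ + a₃) := by
  unfold coneForm₂; ring

variable [LinearOrder R] [IsStrictOrderedRing R]

theorem coneForm₁_nonpos {q a₁ a₂ a₃ : R} (hq : 1 < q) (h₁ : q * a₁ - a₃ ≤ 0)
    (h₂ : -q * a₁ + (q - 1) * a₂ + a₃ ≤ 0) : coneForm₁ q a₁ a₂ a₃ ≤ 0 := by
  refine nonpos_of_mul_nonpos_right (a := q - 1) ?_ (sub_pos.2 hq)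
  rw [sub_one_mul_coneForm₁]
  have hq₀ : 0 ≤ q := zero_le_one.trans hq.le
  exact add_nonpos (mul_nonpos_of_nonneg_of_nonpos (by positivity) h₁)
    (mul_nonpos_of_nonneg_of_nonpos (by positivity) h₂)

theorem coneForm₂_nonpos {q a₁ a₂ a₃ : R} (hq : 1 < q) (h₁ : q * a₁ - a₃ ≤ 0)
    (h₂ : -q * a₁ + (q - 1) * a₂ + a₃ ≤ 0) : coneForm₂ q a₁ a₂ a₃ ≤ 0 := by
  refine nonpos_of_mul_nonpos_right (a := q - 1) ?_ (sub_pos.2 hq)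
  rw [sub_one_mul_coneForm₂]
  have hcoeff : 0 ≤ q ^ 2 - q + 1 := by nlinarith
  exact add_nonpos (mul_nonpos_of_nonneg_of_nonpos hcoeff h₁) h₂

theorem one_sub_pow_three_mul_nonpos {q n : R} (hq : 1 ≤ q) (hn : 0 ≤ n) :
    (1 - q ^ 3) * n ≤ 0 :=
  mul_nonpos_of_nonpos_of_nonneg (sub_nonpos.2 (one_le_pow₀ hq)) hn

end Sp6Stratum135

open Sp6Stratum135 in
/-- Length-2 inductive step for the stratum `[135]` in the `Sp(6)` proof. -/
theorem sp6_step_135 (q a1 a2 a3 n1 n2 : ℝ) (hq : 1 < q)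
    (h1 : q * a1 - a3 ≤ 0)
    (h2 : -q * a1 + (q - 1) * a2 + a3 ≤ 0)
    (hn1 : 0 ≤ n1) (hn2 : 0 ≤ n2) :
    (q ^ 2 + q) * (a1 - q * n2) + (q ^ 2 + 1) * (a2 - q * n1 + (q + 1) * n2) -
        (q + 1) * (a3 - n1 + n2) ≤ 0 ∧
    q ^ 2 * (a1 - q * n2) + (a2 - q * n1 + (q + 1) * n2) - q * (a3 - n1 + n2) ≤ 0 := by
  constructor
  · change coneForm₁ q _ _ _ ≤ 0
    rw [coneForm₁_add_weights]
    exact add_nonpos (coneForm₁_nonpos hq h1 h2) (one_sub_pow_three_mul_nonpos hq.le hn1)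
  · change coneForm₂ q _ _ _ ≤ 0
    rw [coneForm₂_add_weights]
    exact add_nonpos (coneForm₂_nonpos hq h1 h2) (one_sub_pow_three_mul_nonpos hq.le hn2)
end

section
/- Let q ≥ 1 be a real number. Suppose a = (a1,a2,a3) ∈ ℝ³ satisfies −q·a1 + (q+1)·a2 + a3 ≤ 0 and (q+1)·a1 − (q²+1)·a2 + (q²+q)·a3 ≤ 0, and let n1, n2 ≥ 0 be real numbers. Then λ := a + n1·(0,0,−(q+1)) + n2·(q+1,1−q,q+1) satisfies −(q⁴+q²+q+1)·λ1 + (2q³+3q²+2q+1)·λ2 + (q⁴+2q³+q)·λ3 ≤ 0. -/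
/-!
On the `a`-part, the target form is the combination `(q³ + q² + 2q) · ℓ₁ + (q² - 1) · ℓ₂` of the two
hypothesis forms `ℓ₁, ℓ₂`, with coefficients nonnegative for `q ≥ 1`. The weight
`(q + 1, 1 - q, q + 1)` lies in the kernel of the target form, and `(0, 0, -(q + 1))` pairs with it
to `-(q + 1)(q⁴ + 2q³ + q) ≤ 0`.
-/

lemma sp6_362_form_eq (q a1 a2 a3 n1 n2 : ℝ) :
    -(q ^ 4 + q ^ 2 + q + 1) * (a1 + (q + 1) * n2) +
        (2 * q ^ 3 + 3 * q ^ 2 + 2 * q + 1) * (a2 + (1 - q) * n2) +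
        (q ^ 4 + 2 * q ^ 3 + q) * (a3 - (q + 1) * n1 + (q + 1) * n2) =
      (q ^ 3 + q ^ 2 + 2 * q) * (-q * a1 + (q + 1) * a2 + a3) +
        (q ^ 2 - 1) * ((q + 1) * a1 - (q ^ 2 + 1) * a2 + (q ^ 2 + q) * a3) -
        ((q + 1) * (q ^ 4 + 2 * q ^ 3 + q)) * n1 := by
  ring

theorem sp6_step_362_general (q a1 a2 a3 n1 n2 : ℝ) (hq : 1 ≤ q)
    (h1 : -q * a1 + (q + 1) * a2 + a3 ≤ 0)
    (h2 : (q + 1) * a1 - (q ^ 2 + 1) * a2 + (q ^ 2 + q) * a3 ≤ 0)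
    (hn1 : 0 ≤ n1) :
    -(q ^ 4 + q ^ 2 + q + 1) * (a1 + (q + 1) * n2) +
      (2 * q ^ 3 + 3 * q ^ 2 + 2 * q + 1) * (a2 + (1 - q) * n2) +
      (q ^ 4 + 2 * q ^ 3 + q) * (a3 - (q + 1) * n1 + (q + 1) * n2) ≤ 0 := by
  rw [sp6_362_form_eq]
  have hq0 : 0 ≤ q := by linarith
  have hc1 : 0 ≤ q ^ 3 + q ^ 2 + 2 * q := by positivity
  have hc2 : 0 ≤ q ^ 2 - 1 := by nlinarith
  have hc3 : 0 ≤ (q + 1) * (q ^ 4 + 2 * q ^ 3 + q) := by positivity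
  linarith [mul_nonpos_of_nonneg_of_nonpos hc1 h1, mul_nonpos_of_nonneg_of_nonpos hc2 h2,
    mul_nonneg hc3 hn1]

/-- Length-5 inductive step for the stratum `[362]` in the `Sp(6)` proof. -/
theorem sp6_step_362 (q a1 a2 a3 n1 n2 : ℝ) (hq : 1 ≤ q)
    (h1 : -q * a1 + (q + 1) * a2 + a3 ≤ 0)
    (h2 : (q + 1) * a1 - (q ^ 2 + 1) * a2 + (q ^ 2 + q) * a3 ≤ 0)
    (hn1 : 0 ≤ n1) (hn2 : 0 ≤ n2) :
    -(q ^ 4 + q ^ 2 + q + 1) * (a1 + (q + 1) * n2) +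
      (2 * q ^ 3 + 3 * q ^ 2 + 2 * q + 1) * (a2 + (1 - q) * n2) +
      (q ^ 4 + 2 * q ^ 3 + q) * (a3 - (q + 1) * n1 + (q + 1) * n2) ≤ 0 :=
  sp6_step_362_general q a1 a2 a3 n1 n2 hq h1 h2 hn1
end

section
/- Let q ≥ 1 be a real number. Suppose λ ∈ ℝ⁴ can be written as λ = n1·(1−q,1−q,1−q,0) + n2·(1,1−q,−q,0) + n3·(1,0,−q,0) + t·(1,1,1,1) + μ, where n1, n2, n3 ≥ 0 and t are real numbers and μ = (μ1,μ2,μ3,μ4) ∈ ℝ⁴ satisfies μ1 ≥ μ2 ≥ μ3 and q²·(μ1−μ4) + q·(μ2−μ4) + (μ3−μ4) ≤ 0. Then λ1 ≥ λ2 ≥ λ3, q²·(λ1−λ4) + (λ2−λ4) + q·(λ3−λ4) ≤ 0, and q·(λ1−λ4) + q²·(λ2−λ4) + (λ3−λ4) ≤ 0. -/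
/-!
The conditions cutting out `⟨C_zip⟩` are linear and do not change when `(1,1,1,1)` is added,
so they define a pointed cone containing the line `ℝ • (1,1,1,1)`, and it suffices to check the
generators. The Hasse weights satisfy them because `q ≥ 1`. For `μ ∈ C_hw`, with `a, b, c` the
differences `μᵢ - μ₄`, the two zip inequalities exceed the highest weight inequality
`q²a + qb + c ≤ 0` by `(1 - q)(b - c) ≤ 0` and `q(1 - q)(a - b) ≤ 0` respectively.
-/

def zipCone (q : ℝ) : PointedCone ℝ (ℝ × ℝ × ℝ × ℝ) where
  carrier := {l | l.2.1 ≤ l.1 ∧ l.2.2.1 ≤ l.2.1 ∧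
      q ^ 2 * (l.1 - l.2.2.2) + (l.2.1 - l.2.2.2) + q * (l.2.2.1 - l.2.2.2) ≤ 0 ∧
      q * (l.1 - l.2.2.2) + q ^ 2 * (l.2.1 - l.2.2.2) + (l.2.2.1 - l.2.2.2) ≤ 0}
  zero_mem' := by simp
  add_mem' := by
    rintro ⟨a1, a2, a3, a4⟩ ⟨b1, b2, b3, b4⟩ ⟨ha12, ha23, ha, ha'⟩ ⟨hb12, hb23, hb, hb'⟩
    refine ⟨?_, ?_, ?_, ?_⟩ <;> simp only [Prod.mk_add_mk] <;> linarith
  smul_mem' := by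
    rintro ⟨c, hc⟩ ⟨a1, a2, a3, a4⟩ ⟨h12, h23, h, h'⟩
    simp only [Nonneg.mk_smul, Prod.smul_mk, smul_eq_mul]
    refine ⟨?_, ?_, ?_, ?_⟩
    · exact mul_le_mul_of_nonneg_left h12 hc
    · exact mul_le_mul_of_nonneg_left h23 hc
    · nlinarith
    · nlinarith

namespace zipCone

variable {q : ℝ}

theorem mem_iff {l : ℝ × ℝ × ℝ × ℝ} : l ∈ zipCone q ↔ l.2.1 ≤ l.1 ∧ l.2.2.1 ≤ l.2.1 ∧
      q ^ 2 * (l.1 - l.2.2.2) + (l.2.1 - l.2.2.2) + q * (l.2.2.1 - l.2.2.2) ≤ 0 ∧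
      q * (l.1 - l.2.2.2) + q ^ 2 * (l.2.1 - l.2.2.2) + (l.2.2.1 - l.2.2.2) ≤ 0 := Iff.rfl

theorem hasseWeight₁_mem (hq : 1 ≤ q) : (1 - q, 1 - q, 1 - q, (0 : ℝ)) ∈ zipCone q := by
  refine ⟨le_rfl, le_rfl, ?_, ?_⟩ <;> nlinarith

theorem hasseWeight₂_mem (hq : 1 ≤ q) : ((1 : ℝ), 1 - q, -q, (0 : ℝ)) ∈ zipCone q := by
  refine ⟨?_, ?_, ?_, ?_⟩ <;> nlinarith

theorem hasseWeight₃_mem (hq : 0 ≤ q) : ((1 : ℝ), (0 : ℝ), -q, (0 : ℝ)) ∈ zipCone q := by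
  refine ⟨?_, ?_, ?_, ?_⟩ <;> norm_num <;> linarith

theorem smul_one_mem (t : ℝ) : t • ((1 : ℝ), (1 : ℝ), (1 : ℝ), (1 : ℝ)) ∈ zipCone q := by
  simp [mem_iff]

theorem mem_of_highestWeight (hq : 1 ≤ q) {μ : ℝ × ℝ × ℝ × ℝ}
    (hμ12 : μ.2.1 ≤ μ.1) (hμ23 : μ.2.2.1 ≤ μ.2.1)
    (hμ : q ^ 2 * (μ.1 - μ.2.2.2) + q * (μ.2.1 - μ.2.2.2) + (μ.2.2.1 - μ.2.2.2) ≤ 0) :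
    μ ∈ zipCone q := by
  have h23 : (1 - q) * (μ.2.1 - μ.2.2.1) ≤ 0 :=
    mul_nonpos_of_nonpos_of_nonneg (by linarith) (by linarith)
  have h12 : q * (1 - q) * (μ.1 - μ.2.1) ≤ 0 :=
    mul_nonpos_of_nonpos_of_nonneg (mul_nonpos_of_nonneg_of_nonpos (by linarith) (by linarith))
      (by linarith)
  exact ⟨hμ12, hμ23, by linear_combination hμ + h23, by linear_combination hμ + h12⟩

end zipCone

/-- Cone inclusion `C_Hasse + C_hw ⊆ ⟨C_zip⟩` for `GL₄` over `F_q`, type `(3,1)`. -/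
theorem gl4_31_hasse_plus_hw_subset_zip (q : ℝ) (hq : 1 ≤ q)
    (l μ : ℝ × ℝ × ℝ × ℝ) (n1 n2 n3 t : ℝ)
    (hn1 : 0 ≤ n1) (hn2 : 0 ≤ n2) (hn3 : 0 ≤ n3)
    (hμ12 : μ.2.1 ≤ μ.1) (hμ23 : μ.2.2.1 ≤ μ.2.1)
    (hμ : q ^ 2 * (μ.1 - μ.2.2.2) + q * (μ.2.1 - μ.2.2.2) + (μ.2.2.1 - μ.2.2.2) ≤ 0)
    (hl : l = n1 • (1 - q, 1 - q, 1 - q, (0 : ℝ)) + n2 • ((1 : ℝ), 1 - q, -q, (0 : ℝ)) +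
              n3 • ((1 : ℝ), (0 : ℝ), -q, (0 : ℝ)) + t • ((1 : ℝ), (1 : ℝ), (1 : ℝ), (1 : ℝ)) + μ) :
    l.2.1 ≤ l.1 ∧ l.2.2.1 ≤ l.2.1 ∧
      q ^ 2 * (l.1 - l.2.2.2) + (l.2.1 - l.2.2.2) + q * (l.2.2.1 - l.2.2.2) ≤ 0 ∧
      q * (l.1 - l.2.2.2) + q ^ 2 * (l.2.1 - l.2.2.2) + (l.2.2.1 - l.2.2.2) ≤ 0 := by
  rw [← zipCone.mem_iff, hl]
  have hasse₁ := (zipCone q).smul_mem hn1 (zipCone.hasseWeight₁_mem hq)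
  have hasse₂ := (zipCone q).smul_mem hn2 (zipCone.hasseWeight₂_mem hq)
  have hasse₃ := (zipCone q).smul_mem hn3 (zipCone.hasseWeight₃_mem (by linarith))
  exact add_mem (add_mem (add_mem (add_mem hasse₁ hasse₂) hasse₃) (zipCone.smul_one_mem t))
    (zipCone.mem_of_highestWeight hq hμ12 hμ23 hμ)
end

section
/- Let q ≥ 1 be a real number. Suppose a = (a1,a2,a3) ∈ ℝ³ satisfies −q·a1 − q²·a2 + (q²+q+1)·a3 ≤ 0 and (q²+q+1)·a1 − a2 − q·a3 ≤ 0, and let n1, n2 ≥ 0 be real numbers. Then λ := a + n1·(−q,−(q+1),−q) + n2·(1,q+1,1) satisfies both −q·λ2 + (q+1)·λ3 ≤ 0 and (q+1)·λ1 − λ2 ≤ 0. -/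
/-!
Both conclusions split as (linear form of `a`) + (correction in `n1`, `n2`). The linear forms
`-q a₂ + (q+1) a₃` and `(q+1) a₁ - a₂` are positive combinations of the two length-one bounds,
each with the same factor `(q+1)(q²+1)`. Against the Hasse weights, each form pairs to `0` with
one weight and to `(q+1)(1-q) ≤ 0` with the other, so adding nonnegative multiples of the weights
keeps both forms nonpositive.
-/

section LengthOneBounds

variable {q a1 a2 a3 : ℝ}

theorem neg_mul_add_mul_nonpos_of_length_one_bounds (hq : 0 ≤ q)
    (h1 : -q * a1 - q ^ 2 * a2 + (q ^ 2 + q + 1) * a3 ≤ 0)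
    (h2 : (q ^ 2 + q + 1) * a1 - a2 - q * a3 ≤ 0) :
    -q * a2 + (q + 1) * a3 ≤ 0 := by
  have hcomb : (q + 1) * (q ^ 2 + 1) * (-q * a2 + (q + 1) * a3) =
      (q ^ 2 + q + 1) * (-q * a1 - q ^ 2 * a2 + (q ^ 2 + q + 1) * a3) +
        q * ((q ^ 2 + q + 1) * a1 - a2 - q * a3) := by ring
  refine nonpos_of_mul_nonpos_right ?_ (by positivity : 0 < (q + 1) * (q ^ 2 + 1))
  rw [hcomb]
  exact add_nonpos (mul_nonpos_of_nonneg_of_nonpos (by positivity) h1)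
    (mul_nonpos_of_nonneg_of_nonpos hq h2)

theorem mul_sub_nonpos_of_length_one_bounds (hq : 0 ≤ q)
    (h1 : -q * a1 - q ^ 2 * a2 + (q ^ 2 + q + 1) * a3 ≤ 0)
    (h2 : (q ^ 2 + q + 1) * a1 - a2 - q * a3 ≤ 0) :
    (q + 1) * a1 - a2 ≤ 0 := by
  have hcomb : (q + 1) * (q ^ 2 + 1) * ((q + 1) * a1 - a2) =
      q * (-q * a1 - q ^ 2 * a2 + (q ^ 2 + q + 1) * a3) +
        (q ^ 2 + q + 1) * ((q ^ 2 + q + 1) * a1 - a2 - q * a3) := by ring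
  refine nonpos_of_mul_nonpos_right ?_ (by positivity : 0 < (q + 1) * (q ^ 2 + 1))
  rw [hcomb]
  exact add_nonpos (mul_nonpos_of_nonneg_of_nonpos hq h1)
    (mul_nonpos_of_nonneg_of_nonpos (by positivity) h2)

end LengthOneBounds

/-- Length-2 inductive step for the stratum `[2143]` in the `GL₄`, type `(3,1)` proof. -/
theorem gl4_31_step_2143 (q a1 a2 a3 n1 n2 : ℝ) (hq : 1 ≤ q)
    (h1 : -q * a1 - q ^ 2 * a2 + (q ^ 2 + q + 1) * a3 ≤ 0)
    (h2 : (q ^ 2 + q + 1) * a1 - a2 - q * a3 ≤ 0)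
    (hn1 : 0 ≤ n1) (hn2 : 0 ≤ n2) :
    -q * (a2 - (q + 1) * n1 + (q + 1) * n2) + (q + 1) * (a3 - q * n1 + n2) ≤ 0 ∧
    (q + 1) * (a1 - q * n1 + n2) - (a2 - (q + 1) * n1 + (q + 1) * n2) ≤ 0 := by
  have hq0 : 0 ≤ q := zero_le_one.trans hq
  have hweight : 0 ≤ (q + 1) * (q - 1) := mul_nonneg (by linarith) (sub_nonneg.2 hq)
  have hform1 := neg_mul_add_mul_nonpos_of_length_one_bounds hq0 h1 h2
  have hform2 := mul_sub_nonpos_of_length_one_bounds hq0 h1 h2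
  have hshift1 : -q * (a2 - (q + 1) * n1 + (q + 1) * n2) + (q + 1) * (a3 - q * n1 + n2) =
      (-q * a2 + (q + 1) * a3) - (q + 1) * (q - 1) * n2 := by ring
  have hshift2 : (q + 1) * (a1 - q * n1 + n2) - (a2 - (q + 1) * n1 + (q + 1) * n2) =
      ((q + 1) * a1 - a2) - (q + 1) * (q - 1) * n1 := by ring
  rw [hshift1, hshift2]
  exact ⟨by linarith [mul_nonneg hweight hn2], by linarith [mul_nonneg hweight hn1]⟩
end

section
/- Let q ≥ 2 be a real number. The set {(a1,a2,a3) ∈ ℝ³ : a1 ≥ a2, a3 ≥ 0, and q·a1 + a2 − a3 ≤ 0} is equal to the set of all linear combinations with nonnegative real coefficients of the three vectors (1,1,q+1), (1−q,1−q,0) and (1,−q,0). -/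
/-!
The linear forms `a₁ - a₂`, `a₃` and `a₃ - q a₁ - a₂` are, up to the positive factors `q + 1`,
`q + 1` and `q² - 1`, the dual basis of the three generators. So the coefficients of `a` in the
basis of generators are these forms, and they are nonnegative exactly when `a` lies in the cone
cut out by the three inequalities.
-/

lemma eq_generator_combination_iff {q : ℝ} (hq₁ : q + 1 ≠ 0) (hq₂ : q - 1 ≠ 0)
    (a : ℝ × ℝ × ℝ) (c₁ c₂ c₃ : ℝ) :
    a = c₁ • ((1 : ℝ), (1 : ℝ), q + 1) + c₂ • (1 - q, 1 - q, (0 : ℝ)) +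
        c₃ • ((1 : ℝ), -q, (0 : ℝ)) ↔
      c₁ = a.2.2 / (q + 1) ∧ c₂ = (a.2.2 - (q * a.1 + a.2.1)) / ((q + 1) * (q - 1)) ∧
        c₃ = (a.1 - a.2.1) / (q + 1) := by
  obtain ⟨a₁, a₂, a₃⟩ := a
  simp only [Prod.smul_mk, smul_eq_mul, Prod.mk_add_mk, Prod.mk.injEq]
  constructor
  · rintro ⟨rfl, rfl, rfl⟩
    refine ⟨?_, ?_, ?_⟩ <;> field_simp <;> ring
  · rintro ⟨rfl, rfl, rfl⟩
    refine ⟨?_, ?_, ?_⟩ <;> field_simp <;> ring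

/-- For `q ≥ 2`, the cone `{(a1,a2,a3) : a1 ≥ a2, a3 ≥ 0, qa1 + a2 − a3 ≤ 0}` equals the set
of nonnegative real linear combinations of `(1,1,q+1)`, `(1−q,1−q,0)`, `(1,−q,0)`. -/
theorem gl4_22_cone_generators (q : ℝ) (hq : 2 ≤ q) :
    {a : ℝ × ℝ × ℝ | a.2.1 ≤ a.1 ∧ 0 ≤ a.2.2 ∧ q * a.1 + a.2.1 - a.2.2 ≤ 0} =
    {a : ℝ × ℝ × ℝ | ∃ c1 c2 c3 : ℝ, 0 ≤ c1 ∧ 0 ≤ c2 ∧ 0 ≤ c3 ∧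
        a = c1 • ((1 : ℝ), (1 : ℝ), q + 1) + c2 • (1 - q, 1 - q, (0 : ℝ)) +
            c3 • ((1 : ℝ), -q, (0 : ℝ))} := by
  have hq₁ : 0 < q + 1 := by linarith
  have hq₂ : 0 < q - 1 := by linarith
  ext a
  simp only [Set.mem_ofPred_eq, eq_generator_combination_iff hq₁.ne' hq₂.ne']
  constructor
  · rintro ⟨h₁, h₂, h₃⟩
    exact ⟨_, _, _, div_nonneg h₂ hq₁.le, div_nonneg (by linarith) (mul_pos hq₁ hq₂).le,
      div_nonneg (by linarith) hq₁.le, rfl, rfl, rfl⟩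
  · rintro ⟨_, _, _, h₁, h₂, h₃, rfl, rfl, rfl⟩
    rw [le_div_iff₀ hq₁, zero_mul] at h₁ h₃
    rw [le_div_iff₀ (mul_pos hq₁ hq₂), zero_mul] at h₂
    refine ⟨?_, h₁, ?_⟩ <;> linarith
end

section
/- Let q ≥ 1 be a real number and set ε(q) := (q² + 2q + 1)/(q³ + 2q² + 1). Suppose a = (a1,a2,a3) ∈ ℝ³ satisfies the four inequalities q²·a1 + q·a2 + a3 ≤ 0, q·a1 + q·a2 + a3 ≤ 0, −q·a1 + (q²+q+1)·a2 − a3 ≤ 0, and a1 + a2 − (q+2)·a3 ≤ 0, and let n1, n2 ≥ 0 be real numbers. Then λ := a + n1·(0,0,q−1) + n2·(1−q,1−q,1−q) satisfies both λ2 ≤ 0 and λ1 + ε(q)·λ2 ≤ 0. -/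
/-! The two bounds hold for `a` itself, as nonnegative combinations of the hypotheses:
`(q + 1)² a₂` is the sum of the second and third inequalities, and
`(q³ + 2q² + 1) a₁ + (q + 1)² a₂` is `(q + 2)` times the first plus the fourth.
Passing from `a` to `λ` leaves the first two coordinates shifted by the same amount
`n₂ (1 - q) ≤ 0` (the weight `(0, 0, q - 1)` only moves `λ₃`), and since `ε(q) ≥ 0`
such a shift preserves both bounds. -/

section ConeBounds

variable {q a1 a2 a3 : ℝ}

theorem snd_nonpos_of_cone_bounds (hq : 0 ≤ q)
    (h2 : q * a1 + q * a2 + a3 ≤ 0) (h3 : -q * a1 + (q ^ 2 + q + 1) * a2 - a3 ≤ 0) :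
    a2 ≤ 0 := by
  have hsum : (q + 1) ^ 2 * a2 ≤ 0 := by linear_combination h2 + h3
  exact nonpos_of_mul_nonpos_right hsum (by positivity)

theorem fst_add_div_mul_snd_nonpos_of_cone_bounds (hq : 0 ≤ q)
    (h1 : q ^ 2 * a1 + q * a2 + a3 ≤ 0) (h4 : a1 + a2 - (q + 2) * a3 ≤ 0) :
    a1 + (q ^ 2 + 2 * q + 1) / (q ^ 3 + 2 * q ^ 2 + 1) * a2 ≤ 0 := by
  have hD : 0 < q ^ 3 + 2 * q ^ 2 + 1 := by positivity
  have hcomb : (q ^ 3 + 2 * q ^ 2 + 1) * a1 + (q ^ 2 + 2 * q + 1) * a2 ≤ 0 := by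
    linear_combination (q + 2) * h1 + h4
  calc a1 + (q ^ 2 + 2 * q + 1) / (q ^ 3 + 2 * q ^ 2 + 1) * a2
      = ((q ^ 3 + 2 * q ^ 2 + 1) * a1 + (q ^ 2 + 2 * q + 1) * a2)
          / (q ^ 3 + 2 * q ^ 2 + 1) := by field_simp
    _ ≤ 0 := div_nonpos_of_nonpos_of_nonneg hcomb hD.le

end ConeBounds

theorem add_add_mul_add_nonpos {α : Type*} [CommRing α] [LinearOrder α] [IsOrderedRing α]
    {x y e t : α} (h : x + e * y ≤ 0) (he : 0 ≤ e) (ht : t ≤ 0) :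
    (x + t) + e * (y + t) ≤ 0 := by
  have : e * t ≤ 0 := mul_nonpos_of_nonneg_of_nonpos he ht
  linear_combination h + ht + this

theorem gl4_22_step_3421_general (q a1 a2 a3 n2 : ℝ) (hq : 1 ≤ q)
    (h1 : q ^ 2 * a1 + q * a2 + a3 ≤ 0)
    (h2 : q * a1 + q * a2 + a3 ≤ 0)
    (h3 : -q * a1 + (q ^ 2 + q + 1) * a2 - a3 ≤ 0)
    (h4 : a1 + a2 - (q + 2) * a3 ≤ 0)
    (hn2 : 0 ≤ n2) :
    a2 + n2 * (1 - q) ≤ 0 ∧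
    (a1 + n2 * (1 - q)) +
      ((q ^ 2 + 2 * q + 1) / (q ^ 3 + 2 * q ^ 2 + 1)) * (a2 + n2 * (1 - q)) ≤ 0 := by
  have hq0 : 0 ≤ q := zero_le_one.trans hq
  have hshift : n2 * (1 - q) ≤ 0 := mul_nonpos_of_nonneg_of_nonpos hn2 (by linarith)
  have ha2 := snd_nonpos_of_cone_bounds hq0 h2 h3
  exact ⟨add_nonpos ha2 hshift,
    add_add_mul_add_nonpos (fst_add_div_mul_snd_nonpos_of_cone_bounds hq0 h1 h4)
      (by positivity) hshift⟩

/-- Length-5 inductive step for the stratum `[3421]` in the `GL₄`, type `(2,2)` proof. -/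
theorem gl4_22_step_3421 (q a1 a2 a3 n1 n2 : ℝ) (hq : 1 ≤ q)
    (h1 : q ^ 2 * a1 + q * a2 + a3 ≤ 0)
    (h2 : q * a1 + q * a2 + a3 ≤ 0)
    (h3 : -q * a1 + (q ^ 2 + q + 1) * a2 - a3 ≤ 0)
    (h4 : a1 + a2 - (q + 2) * a3 ≤ 0)
    (hn1 : 0 ≤ n1) (hn2 : 0 ≤ n2) :
    a2 + n2 * (1 - q) ≤ 0 ∧
    (a1 + n2 * (1 - q)) +
      ((q ^ 2 + 2 * q + 1) / (q ^ 3 + 2 * q ^ 2 + 1)) * (a2 + n2 * (1 - q)) ≤ 0 :=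
  gl4_22_step_3421_general q a1 a2 a3 n2 hq h1 h2 h3 h4 hn2
end

section
/- Let q ≥ 1 be a real number and set ε(q) := (q² + 2q + 1)/(q³ + 2q² + 1). Suppose a = (a1,a2,a3) ∈ ℝ³ satisfies a2 ≤ 0, a1 + ε(q)·a2 ≤ 0, and a1 − a3 ≤ 0, and let n1, n2 ≥ 0 be real numbers. Then λ := a + n1·(1,1,q+1) + n2·(1,−q,0) satisfies q·λ1 + λ2 − λ3 ≤ 0. -/
/-!
Both Hasse weights `(1,1,q+1)` and `(1,-q,0)` are annihilated by the form `q x₁ + x₂ - x₃`, so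
only `a` matters. Using `a₃ ≥ a₁` and then `a₁ ≤ -ε a₂` bounds the form by `(1 - (q-1) ε) a₂`,
which is `≤ 0` because `(q-1)(q+1)² ≤ q³ + 2q² + 1`.
-/

theorem sub_one_mul_div_le_one {q : ℝ} (hq : 0 ≤ q) :
    (q - 1) * ((q ^ 2 + 2 * q + 1) / (q ^ 3 + 2 * q ^ 2 + 1)) ≤ 1 := by
  rw [mul_div_assoc', div_le_one (by positivity)]
  nlinarith [sq_nonneg q]

theorem mul_add_sub_nonpos_of_cone {q e a1 a2 a3 : ℝ} (hq : 1 ≤ q) (he : (q - 1) * e ≤ 1)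
    (h1 : a2 ≤ 0) (h2 : a1 + e * a2 ≤ 0) (h3 : a1 - a3 ≤ 0) :
    q * a1 + a2 - a3 ≤ 0 :=
  calc q * a1 + a2 - a3 ≤ (q - 1) * a1 + a2 := by linarith
    _ ≤ (q - 1) * -(e * a2) + a2 := by gcongr; linarith
    _ = (1 - (q - 1) * e) * a2 := by ring
    _ ≤ 0 := mul_nonpos_of_nonneg_of_nonpos (by linarith) h1

theorem gl4_22_step_4321_general (q a1 a2 a3 n1 n2 : ℝ) (hq : 1 ≤ q)
    (h1 : a2 ≤ 0)
    (h2 : a1 + ((q ^ 2 + 2 * q + 1) / (q ^ 3 + 2 * q ^ 2 + 1)) * a2 ≤ 0)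
    (h3 : a1 - a3 ≤ 0) :
    q * (a1 + n1 + n2) + (a2 + n1 - q * n2) - (a3 + (q + 1) * n1) ≤ 0 := by
  have hasse_weights : q * (a1 + n1 + n2) + (a2 + n1 - q * n2) - (a3 + (q + 1) * n1)
      = q * a1 + a2 - a3 := by ring
  rw [hasse_weights]
  exact mul_add_sub_nonpos_of_cone hq (sub_one_mul_div_le_one (by linarith)) h1 h2 h3

/-- Final inductive step for the longest element `[4321]` in the `GL₄`, type `(2,2)` proof. -/
theorem gl4_22_step_4321 (q a1 a2 a3 n1 n2 : ℝ) (hq : 1 ≤ q)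
    (h1 : a2 ≤ 0)
    (h2 : a1 + ((q ^ 2 + 2 * q + 1) / (q ^ 3 + 2 * q ^ 2 + 1)) * a2 ≤ 0)
    (h3 : a1 - a3 ≤ 0)
    (hn1 : 0 ≤ n1) (hn2 : 0 ≤ n2) :
    q * (a1 + n1 + n2) + (a2 + n1 - q * n2) - (a3 + (q + 1) * n1) ≤ 0 :=
  gl4_22_step_4321_general q a1 a2 a3 n1 n2 hq h1 h2 h3
end

section
/- Let q ≥ 1 be a real number. Suppose a = (a1,a2,a3) ∈ ℝ³ satisfies q²·a1 + a2 − q·a3 ≤ 0, −(q−1)·a1 − a2 + q·a3 ≤ 0, and −q·a1 + (q−1)·a2 + a3 ≤ 0, and let n1, n2 ≥ 0 be real numbers. Then λ := a + n1·(0,−1,−q) + n2·(1−q,1,1) satisfies λ1 ≤ 0, λ1 − λ2 + q·λ3 ≤ 0, and q·λ1 + (q²−q+1)·λ2 − λ3 ≤ 0. -/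
/-!
Each of the three linear forms of the conclusion is nonpositive on `a` and on the two Hasse
weights `(0, -1, -q)` and `(1 - q, 1, 1)`, hence on `λ = a + n₁ (0, -1, -q) + n₂ (1 - q, 1, 1)`.
On the weights this is a direct evaluation: the forms take the values `0, 1 - q`, then
`1 - q², 0`, then `-(q - 1)², 0`. On `a` it is an explicit nonnegative combination of the
hypotheses, with `D = q² - q + 1 > 0`: `D a₁` is the sum of the first two,
`a₁ - a₂ + q a₃` is the second plus `q a₁`, and `D (q a₁ + D a₂ - a₃)` is `q²` times the first
plus `(q - 1)(q² + 1)` times the third.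
-/

variable {K : Type*} [Field K] [LinearOrder K] [IsStrictOrderedRing K]

theorem sq_sub_self_add_one_pos (q : K) : 0 < q ^ 2 - q + 1 := by
  nlinarith [sq_nonneg (2 * q - 1)]

namespace U4Stratum2341

variable {q a1 a2 a3 : K}

theorem a1_nonpos (h1 : q ^ 2 * a1 + a2 - q * a3 ≤ 0) (h2 : -(q - 1) * a1 - a2 + q * a3 ≤ 0) :
    a1 ≤ 0 :=
  nonpos_of_mul_nonpos_right (by linear_combination h1 + h2) (sq_sub_self_add_one_pos q)

theorem a1_sub_a2_add_mul_a3_nonpos (hq : 0 ≤ q) (h1 : q ^ 2 * a1 + a2 - q * a3 ≤ 0)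
    (h2 : -(q - 1) * a1 - a2 + q * a3 ≤ 0) : a1 - a2 + q * a3 ≤ 0 := by
  linear_combination h2 + q * a1_nonpos h1 h2

theorem mul_a1_add_mul_a2_sub_a3_nonpos (hq : 1 ≤ q) (h1 : q ^ 2 * a1 + a2 - q * a3 ≤ 0)
    (h3 : -q * a1 + (q - 1) * a2 + a3 ≤ 0) : q * a1 + (q ^ 2 - q + 1) * a2 - a3 ≤ 0 := by
  have hcoeff : 0 ≤ (q - 1) * (q ^ 2 + 1) := mul_nonneg (sub_nonneg.2 hq) (by positivity)
  refine nonpos_of_mul_nonpos_right ?_ (sq_sub_self_add_one_pos q)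
  linear_combination q ^ 2 * h1 + ((q - 1) * (q ^ 2 + 1)) * h3

end U4Stratum2341

/-- Length-3 inductive step for the stratum `[2341]` in the `U(4)`, signature `(3,1)` proof. -/
theorem u4_31_step_2341 (q a1 a2 a3 n1 n2 : ℝ) (hq : 1 ≤ q)
    (h1 : q ^ 2 * a1 + a2 - q * a3 ≤ 0)
    (h2 : -(q - 1) * a1 - a2 + q * a3 ≤ 0)
    (h3 : -q * a1 + (q - 1) * a2 + a3 ≤ 0)
    (hn1 : 0 ≤ n1) (hn2 : 0 ≤ n2) :
    a1 + n2 * (1 - q) ≤ 0 ∧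
    (a1 + n2 * (1 - q)) - (a2 - n1 + n2) + q * (a3 - q * n1 + n2) ≤ 0 ∧
    q * (a1 + n2 * (1 - q)) + (q ^ 2 - q + 1) * (a2 - n1 + n2) - (a3 - q * n1 + n2) ≤ 0 := by
  have hχ₂_one : n2 * (1 - q) ≤ 0 := mul_nonpos_of_nonneg_of_nonpos hn2 (by linarith)
  have hχ₁_two : 0 ≤ n1 * (q ^ 2 - 1) := mul_nonneg hn1 (by nlinarith)
  have hχ₁_three : 0 ≤ n1 * (q - 1) ^ 2 := mul_nonneg hn1 (sq_nonneg _)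
  refine ⟨?_, ?_, ?_⟩
  · linear_combination U4Stratum2341.a1_nonpos h1 h2 + hχ₂_one
  · linear_combination
      U4Stratum2341.a1_sub_a2_add_mul_a3_nonpos (by linarith) h1 h2 + hχ₁_two
  · linear_combination U4Stratum2341.mul_a1_add_mul_a2_sub_a3_nonpos hq h1 h3 + hχ₁_three
end
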